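/- Let D be an invertible n×n real matrix, λ a nonzero real number, α and β n×1 column vectors, and set L = -D^{-1} + (1/λ) β α^T. If α^T D = λ j^T, D β = λ j, and j^T β = α^T j = 1, then L is Laplacian-like, i.e. L j = 0 and j^T L = 0. -/

import Mathlib

open Matrix

theorem stmt_4 {n : ℕ} (D : Matrix (Fin n) (Fin n) ℝ) (hD : IsUnit D.det)
    (lam : ℝ) (hlam : lam ≠ 0) (α β : Fin n → ℝ)
    (L : Matrix (Fin n) (Fin n) ℝ) (hL : L = -D⁻¹ + lam⁻¹ • vecMulVec β α)
    (h1 : vecMul α D = fun _ => lam)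
    (h2 : D.mulVec β = fun _ => lam)
    (h3 : (∑ i, β i) = 1) (h4 : (∑ i, α i) = 1) :
    L.mulVec (fun _ => 1) = 0 ∧ vecMul (fun _ => 1) L = 0 := by
  have hinv : D⁻¹ * D = 1 := nonsing_inv_mul D hD
  have hinv' : D * D⁻¹ = 1 := mul_nonsing_inv D hD
  have hβ : D⁻¹.mulVec (fun _ => lam) = β := by
    rw [← h2, mulVec_mulVec, hinv, one_mulVec]
  have hα : vecMul (fun _ => lam) D⁻¹ = α := by
    rw [← h1, vecMul_vecMul, hinv', vecMul_one]
  have hb1 : D⁻¹.mulVec (fun _ => 1) = lam⁻¹ • β := by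
    rw [← hβ]
    have : (fun _ : Fin n => lam) = lam • (fun _ : Fin n => (1:ℝ)) := by
      funext i; simp
    rw [this, mulVec_smul, smul_smul, inv_mul_cancel₀ hlam, one_smul]
  have ha1 : vecMul (fun _ => 1) D⁻¹ = lam⁻¹ • α := by
    rw [← hα]
    have : (fun _ : Fin n => lam) = lam • (fun _ : Fin n => (1:ℝ)) := by
      funext i; simp
    rw [this, smul_vecMul, smul_smul, inv_mul_cancel₀ hlam, one_smul]
  subst hL
  constructor
  · funext i
    simp only [add_mulVec, neg_mulVec, smul_mulVec, hb1,
      Pi.add_apply, Pi.neg_apply, Pi.smul_apply, Pi.zero_apply, smul_eq_mul]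
    have : (vecMulVec β α).mulVec (fun _ => 1) i = β i * ∑ j, α j := by
      simp [vecMulVec, mulVec, dotProduct, Finset.mul_sum]
    rw [this, h4]
    ring
  · funext i
    simp only [vecMul_add, vecMul_neg, ha1,
      Pi.add_apply, Pi.neg_apply, Pi.smul_apply, Pi.zero_apply, smul_eq_mul]
    have : vecMul (fun _ => 1) (lam⁻¹ • vecMulVec β α) i
        = lam⁻¹ * ((∑ j, β j) * α i) := by
      simp [vecMulVec, vecMul, dotProduct, Finset.sum_mul, Matrix.smul_apply,
        Finset.mul_sum]
    rw [this, h3]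
    ring
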